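/- arXiv:1903.06090 — 3 statements merged into one kernel-verified Lean document; each statement's English description precedes it below -/
import Mathlib

section
/- Let P and Q be finite p-groups in CP₂ of the same order p^n and the same exponent p^m. Suppose |Ω_{m-i}(P)| = |Ω_{m-i}(Q)| for i = 0, 1, ..., t. If |Ω_{m-t-1}(P)| < |Ω_{m-t-1}(Q)|, then ψ(P) > ψ(Q). -/
/-- Sum of the orders of the elements of a group. -/
noncomputable def psi (G : Type*) [Group G] : ℕ := ∑ᶠ x : G, orderOf x

/-- `Omega p G i` is the subgroup generated by all `x` with `x ^ p ^ i = 1`. -/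
def Omega (p : ℕ) (G : Type*) [Group G] (i : ℕ) : Subgroup G :=
  Subgroup.closure {x : G | x ^ p ^ i = 1}

/-- The class `CP₂`: `o(xy) ≤ max (o x) (o y)` for all `x y`. -/
def CP2 (G : Type*) [Group G] : Prop :=
  ∀ x y : G, orderOf (x * y) ≤ max (orderOf x) (orderOf y)

open Finset

/-- In a `CP₂` p-group, `Omega` is exactly the set of elements of order dividing `p ^ i`. -/
lemma mem_Omega_iff {p : ℕ} {G : Type*} [Group G] (hp : p.Prime) (hG : IsPGroup p G)
    (hcp : CP2 G) (i : ℕ) (x : G) : x ∈ Omega p G i ↔ x ^ p ^ i = 1 := by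
  have hpos : 0 < p ^ i := pow_pos hp.pos i
  let S : Subgroup G :=
  { carrier := {y : G | y ^ p ^ i = 1}
    one_mem' := one_pow _
    inv_mem' := by
      intro a ha
      simp only [Set.mem_setOf_eq] at ha ⊢
      rw [inv_pow, ha, inv_one]
    mul_mem' := by
      intro a b ha hb
      simp only [Set.mem_setOf_eq] at ha hb ⊢
      obtain ⟨k, hk⟩ := hG (a * b)
      obtain ⟨c, _, hc⟩ := (Nat.dvd_prime_pow hp).1 (orderOf_dvd_of_pow_eq_one hk)
      have h1 : orderOf a ≤ p ^ i := Nat.le_of_dvd hpos (orderOf_dvd_of_pow_eq_one ha)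
      have h2 : orderOf b ≤ p ^ i := Nat.le_of_dvd hpos (orderOf_dvd_of_pow_eq_one hb)
      have h3 : p ^ c ≤ p ^ i := hc ▸ le_trans (hcp a b) (max_le h1 h2)
      have hci : c ≤ i := (Nat.pow_le_pow_iff_right hp.one_lt).1 h3
      have hdvd : orderOf (a * b) ∣ p ^ i := hc ▸ pow_dvd_pow p hci
      exact orderOf_dvd_iff_pow_eq_one.1 hdvd }
  have hS : Omega p G i = S := by
    apply le_antisymm
    · exact (Subgroup.closure_le S).2 (fun y hy => hy)
    · exact fun y hy => Subgroup.subset_closure hy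
  rw [hS]
  exact Iff.rfl

/-- The cardinality of `Omega` in a `CP₂` p-group. -/
lemma card_Omega {p : ℕ} {G : Type*} [Group G] (hp : p.Prime) (hG : IsPGroup p G)
    (hcp : CP2 G) (i : ℕ) :
    Nat.card (Omega p G i) = Nat.card {x : G // x ^ p ^ i = 1} :=
  Nat.card_congr (Equiv.subtypeEquivRight (fun x => mem_Omega_iff hp hG hcp i x))

/-- `Omega` at level `0` is trivial. -/
lemma card_Omega_zero (p : ℕ) (G : Type*) [Group G] : Nat.card (Omega p G 0) = 1 := by
  have h1 : Omega p G 0 = ⊥ := by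
    rw [Omega]
    have h2 : {x : G | x ^ p ^ 0 = 1} = {1} := by
      ext x; simp
    rw [h2, Subgroup.closure_singleton_one]
  rw [h1]
  simp

/-- The two complementary counts add up to the cardinality of the group. -/
lemma card_add_card_not {G : Type*} [Finite G] (P : G → Prop) :
    Nat.card {x : G // P x} + Nat.card {x : G // ¬ P x} = Nat.card G := by
  classical
  letI : Fintype G := Fintype.ofFinite G
  rw [Nat.card_eq_fintype_card, Nat.card_eq_fintype_card, Nat.card_eq_fintype_card,
    Fintype.card_subtype, Fintype.card_subtype, ← Finset.card_univ]
  exact Finset.card_filter_add_card_filter_not _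

/-- Telescoping sum of the weights. -/
lemma sum_weights {p : ℕ} (hp : p.Prime) (a : ℕ) :
    ∑ i ∈ Finset.range a, (p ^ (i + 1) - p ^ i) = p ^ a - 1 := by
  induction a with
  | zero => simp
  | succ a ih =>
    rw [Finset.sum_range_succ, ih]
    have h1 : 1 ≤ p ^ a := Nat.one_le_pow _ _ hp.pos
    have h2 : p ^ a ≤ p ^ (a + 1) := Nat.pow_le_pow_right hp.pos a.le_succ
    omega

/-- The order of an element of a p-group of exponent dividing `p ^ m`, expressed as a
telescoping sum over the "layers". -/
lemma orderOf_eq_sum {p m : ℕ} {G : Type*} [Group G] [DecidableEq G] (hp : p.Prime)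
    (hG : IsPGroup p G) (hexp : Monoid.exponent G = p ^ m) (x : G) :
    orderOf x = 1 + ∑ i ∈ Finset.range m,
      (p ^ (i + 1) - p ^ i) * (if x ^ p ^ i = 1 then 0 else 1) := by
  obtain ⟨k, hk⟩ := hG x
  obtain ⟨a, _, hax⟩ := (Nat.dvd_prime_pow hp).1 (orderOf_dvd_of_pow_eq_one hk)
  have ham : a ≤ m := by
    have hdvd : orderOf x ∣ p ^ m := hexp ▸ Monoid.order_dvd_exponent x
    rw [hax] at hdvd
    exact (Nat.pow_dvd_pow_iff_le_right hp.one_lt).1 hdvd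
  have hiff : ∀ i, (x ^ p ^ i = 1) ↔ a ≤ i := by
    intro i
    rw [← orderOf_dvd_iff_pow_eq_one, hax, Nat.pow_dvd_pow_iff_le_right hp.one_lt]
  have step : ∀ i, (p ^ (i + 1) - p ^ i) * (if x ^ p ^ i = 1 then 0 else 1)
      = if i < a then p ^ (i + 1) - p ^ i else 0 := by
    intro i
    by_cases h : a ≤ i
    · rw [if_pos ((hiff i).2 h), if_neg (by omega)]
      ring
    · rw [if_neg (fun hc => h ((hiff i).1 hc)), if_pos (by omega)]
      ring
  rw [Finset.sum_congr rfl (fun i _ => step i), ← Finset.sum_filter]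
  have hfil : (Finset.range m).filter (fun i => i < a) = Finset.range a := by
    ext i
    simp only [Finset.mem_filter, Finset.mem_range]
    omega
  rw [hfil, sum_weights hp a, hax]
  have h1 : 1 ≤ p ^ a := Nat.one_le_pow _ _ hp.pos
  omega

/-- `psi` as a weighted sum of the counts of elements of order larger than `p ^ i`. -/
lemma psi_formula {p m : ℕ} {G : Type*} [Group G] [Finite G]
    (hp : p.Prime) (hG : IsPGroup p G) (hexp : Monoid.exponent G = p ^ m) :
    psi G = Nat.card G + ∑ i ∈ Finset.range m, (p ^ (i + 1) - p ^ i) *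
      Nat.card {x : G // ¬ x ^ p ^ i = 1} := by
  classical
  letI : Fintype G := Fintype.ofFinite G
  have hcount : ∀ i : ℕ, (∑ x : G, if x ^ p ^ i = 1 then 0 else 1)
      = Nat.card {x : G // ¬ x ^ p ^ i = 1} := by
    intro i
    rw [Nat.card_eq_fintype_card, Fintype.card_subtype, Finset.card_eq_sum_ones,
      Finset.sum_filter]
    refine Finset.sum_congr rfl (fun x _ => ?_)
    by_cases h : x ^ p ^ i = 1 <;> simp [h]
  rw [psi, finsum_eq_sum_of_fintype]
  calc ∑ x : G, orderOf x
      = ∑ x : G, (1 + ∑ i ∈ Finset.range m,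
          (p ^ (i + 1) - p ^ i) * (if x ^ p ^ i = 1 then 0 else 1)) :=
        Finset.sum_congr rfl (fun x _ => orderOf_eq_sum hp hG hexp x)
    _ = Nat.card G + ∑ x : G, ∑ i ∈ Finset.range m,
          (p ^ (i + 1) - p ^ i) * (if x ^ p ^ i = 1 then 0 else 1) := by
        rw [Finset.sum_add_distrib, Finset.sum_const, Finset.card_univ, smul_eq_mul, mul_one,
          Nat.card_eq_fintype_card]
    _ = Nat.card G + ∑ i ∈ Finset.range m, ∑ x : G,
          (p ^ (i + 1) - p ^ i) * (if x ^ p ^ i = 1 then 0 else 1) := by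
        rw [Finset.sum_comm]
    _ = Nat.card G + ∑ i ∈ Finset.range m, (p ^ (i + 1) - p ^ i) *
          Nat.card {x : G // ¬ x ^ p ^ i = 1} := by
        congr 1
        refine Finset.sum_congr rfl (fun i _ => ?_)
        rw [← Finset.mul_sum, hcount i]

theorem stmt_6 {p n m t : ℕ} (hp : p.Prime) (P Q : Type*) [Group P] [Finite P]
    [Group Q] [Finite Q] (hPp : IsPGroup p P) (hQp : IsPGroup p Q)
    (hcpP : CP2 P) (hcpQ : CP2 Q)
    (hcardP : Nat.card P = p ^ n) (hcardQ : Nat.card Q = p ^ n)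
    (hexpP : Monoid.exponent P = p ^ m) (hexpQ : Monoid.exponent Q = p ^ m)
    (heq : ∀ i ≤ t, Nat.card (Omega p P (m - i)) = Nat.card (Omega p Q (m - i)))
    (hlt : Nat.card (Omega p P (m - t - 1)) < Nat.card (Omega p Q (m - t - 1))) :
    psi Q < psi P := by
  by_cases hmt : m ≤ t + 1
  · have h0 : m - t - 1 = 0 := by omega
    rw [h0, card_Omega_zero p P, card_Omega_zero p Q] at hlt
    exact absurd hlt (lt_irrefl 1)
  push_neg at hmt
  set j := m - t - 1 with hj
  have hjm : j < m := by omega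
  -- counting functions
  set cP : ℕ → ℕ := fun i => Nat.card {x : P // x ^ p ^ i = 1} with hcPdef
  set cQ : ℕ → ℕ := fun i => Nat.card {x : Q // x ^ p ^ i = 1} with hcQdef
  set dP : ℕ → ℕ := fun i => Nat.card {x : P // ¬ x ^ p ^ i = 1} with hdPdef
  set dQ : ℕ → ℕ := fun i => Nat.card {x : Q // ¬ x ^ p ^ i = 1} with hdQdef
  have hOP : ∀ i, Nat.card (Omega p P i) = cP i := fun i => card_Omega hp hPp hcpP i
  have hOQ : ∀ i, Nat.card (Omega p Q i) = cQ i := fun i => card_Omega hp hQp hcpQ i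
  have hdcP : ∀ i, cP i + dP i = p ^ n := by
    intro i
    rw [hcPdef, hdPdef, ← hcardP]
    exact card_add_card_not _
  have hdcQ : ∀ i, cQ i + dQ i = p ^ n := by
    intro i
    rw [hcQdef, hdQdef, ← hcardQ]
    exact card_add_card_not _
  -- equality of counts above level j
  have hceq : ∀ i, j < i → i < m → cP i = cQ i := by
    intro i hji him
    have h2 : m - i ≤ t := by omega
    have h3 := heq (m - i) h2
    have h1 : m - (m - i) = i := by omega
    rw [h1, hOP, hOQ] at h3
    exact h3
  -- strict inequality at level j
  have hcj : cP j < cQ j := by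
    rw [hOP, hOQ] at hlt
    exact hlt
  -- basic bounds
  have honeP : ∀ i, 1 ≤ cP i := by
    intro i
    have : Nonempty {x : P // x ^ p ^ i = 1} := ⟨1, one_pow _⟩
    exact Nat.card_pos
  have honeQ : ∀ i, 1 ≤ cQ i := by
    intro i
    have : Nonempty {x : Q // x ^ p ^ i = 1} := ⟨1, one_pow _⟩
    exact Nat.card_pos
  have hmonoP : ∀ i i', i ≤ i' → cP i ≤ cP i' := by
    intro i i' hii
    refine Nat.card_le_card_of_injective
      (fun y => (⟨y.1, ?_⟩ : {x : P // x ^ p ^ i' = 1})) ?_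
    · have h1 : p ^ i' = p ^ i * p ^ (i' - i) := by rw [← pow_add]; congr 1; omega
      rw [h1, pow_mul, y.2, one_pow]
    · intro y z hyz
      simp only [Subtype.mk.injEq] at hyz
      exact Subtype.ext hyz
  -- cP j, cQ j are p-powers, so cQ j ≥ p * cP j
  have hpmul : p * cP j ≤ cQ j := by
    have hdvdP : cP j ∣ p ^ n := by
      rw [← hOP, ← hcardP]; exact Subgroup.card_subgroup_dvd_card _
    have hdvdQ : cQ j ∣ p ^ n := by
      rw [← hOQ, ← hcardQ]; exact Subgroup.card_subgroup_dvd_card _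
    obtain ⟨a, _, haP⟩ := (Nat.dvd_prime_pow hp).1 hdvdP
    obtain ⟨b, _, hbQ⟩ := (Nat.dvd_prime_pow hp).1 hdvdQ
    have hab : a < b := by
      rw [haP, hbQ] at hcj
      exact (Nat.pow_lt_pow_iff_right hp.one_lt).1 hcj
    rw [haP, hbQ, ← pow_succ']
    exact Nat.pow_le_pow_right hp.pos hab
  -- psi formulas
  have hpsiP : psi P = p ^ n + ∑ i ∈ Finset.range m, (p ^ (i + 1) - p ^ i) * dP i := by
    rw [psi_formula hp hPp hexpP, hcardP]
  have hpsiQ : psi Q = p ^ n + ∑ i ∈ Finset.range m, (p ^ (i + 1) - p ^ i) * dQ i := by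
    rw [psi_formula hp hQp hexpQ, hcardQ]
  rw [hpsiP, hpsiQ]
  apply Nat.add_lt_add_left
  -- split the sums at j
  have split : ∀ (f : ℕ → ℕ), ∑ i ∈ Finset.range m, f i
      = (∑ i ∈ Finset.range j, f i + f j) + ∑ i ∈ Finset.Ico (j + 1) m, f i := by
    intro f
    rw [Finset.range_eq_Ico,
      ← Finset.sum_Ico_consecutive f (Nat.zero_le (j + 1)) (by omega : j + 1 ≤ m),
      ← Finset.range_eq_Ico, Finset.sum_range_succ]
  rw [split (fun i => (p ^ (i + 1) - p ^ i) * dQ i),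
    split (fun i => (p ^ (i + 1) - p ^ i) * dP i)]
  -- tails agree
  have htail : ∑ i ∈ Finset.Ico (j + 1) m, (p ^ (i + 1) - p ^ i) * dQ i
      = ∑ i ∈ Finset.Ico (j + 1) m, (p ^ (i + 1) - p ^ i) * dP i := by
    refine Finset.sum_congr rfl (fun i hi => ?_)
    rw [Finset.mem_Ico] at hi
    have h1 := hceq i (by omega) hi.2
    have h2 := hdcP i
    have h3 := hdcQ i
    have h4 : dQ i = dP i := by omega
    rw [h4]
  -- initial segment: bounded overshoot
  have hmid : ∑ i ∈ Finset.range j, (p ^ (i + 1) - p ^ i) * dQ i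
      ≤ ∑ i ∈ Finset.range j, (p ^ (i + 1) - p ^ i) * dP i + (p ^ j - 1) * (cP j - 1) := by
    calc ∑ i ∈ Finset.range j, (p ^ (i + 1) - p ^ i) * dQ i
        ≤ ∑ i ∈ Finset.range j, ((p ^ (i + 1) - p ^ i) * dP i
            + (p ^ (i + 1) - p ^ i) * (cP j - 1)) := by
          refine Finset.sum_le_sum (fun i hi => ?_)
          rw [Finset.mem_range] at hi
          rw [← Nat.mul_add]
          apply Nat.mul_le_mul_left
          have h1 := hdcP i
          have h2 := hdcQ i
          have h3 := honeQ i
          have h4 := hmonoP i j hi.le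
          have h5 := honeP i
          omega
      _ = ∑ i ∈ Finset.range j, (p ^ (i + 1) - p ^ i) * dP i
            + (∑ i ∈ Finset.range j, (p ^ (i + 1) - p ^ i)) * (cP j - 1) := by
          rw [Finset.sum_add_distrib, Finset.sum_mul]
      _ = ∑ i ∈ Finset.range j, (p ^ (i + 1) - p ^ i) * dP i + (p ^ j - 1) * (cP j - 1) := by
          rw [sum_weights hp j]
  -- head: the strict gain at level j
  have hhead : (p ^ (j + 1) - p ^ j) * dQ j + (p ^ j - 1) * (cP j - 1)
      < (p ^ (j + 1) - p ^ j) * dP j := by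
    have hdj : dP j = dQ j + (cQ j - cP j) := by
      have h1 := hdcP j
      have h2 := hdcQ j
      omega
    rw [hdj, Nat.mul_add]
    have hkey : (p ^ j - 1) * (cP j - 1) < (p ^ (j + 1) - p ^ j) * (cQ j - cP j) := by
      have hPj : 1 ≤ p ^ j := Nat.one_le_pow _ _ hp.pos
      have hK1 : 1 ≤ cP j := honeP j
      have hsucc : p ^ (j + 1) = p * p ^ j := by rw [pow_succ]; ring
      have h2Pj : 2 * p ^ j ≤ p * p ^ j := Nat.mul_le_mul_right _ hp.two_le
      have hwge : p ^ j ≤ p ^ (j + 1) - p ^ j := by omega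
      have h2K : 2 * cP j ≤ p * cP j := Nat.mul_le_mul_right _ hp.two_le
      have hcge : cP j ≤ cQ j - cP j := by omega
      have h5 : p ^ j * cP j ≤ (p ^ (j + 1) - p ^ j) * (cQ j - cP j) :=
        Nat.mul_le_mul hwge hcge
      have h6 : (p ^ j - 1) * (cP j - 1) < p ^ j * cP j := by
        calc (p ^ j - 1) * (cP j - 1) ≤ (p ^ j - 1) * cP j :=
              Nat.mul_le_mul_left _ (Nat.sub_le _ _)
          _ < p ^ j * cP j := (Nat.mul_lt_mul_right (by omega)).2 (by omega)
      exact lt_of_lt_of_le h6 h5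
    omega
  omega
end

section
/- Let P and Q be finite p-groups in CP₂ of the same order p^n. If ψ(P) = ψ(Q), then |Ω_i(P)| = |Ω_i(Q)| for all natural numbers i. -/
open Finset

theorem StrictMono.eq_of_sum_range_pow_eq {p N : ℕ} (hp : 2 ≤ p) {a b : ℕ → ℕ}
    (ha : StrictMono a) (hb : StrictMono b)
    (h : ∑ i ∈ range N, p ^ a i = ∑ i ∈ range N, p ^ b i) {i : ℕ} (hi : i < N) :
    a i = b i := by
  have himage : (range N).map ⟨a, ha.injective⟩ = (range N).map ⟨b, hb.injective⟩ :=
    geomSum_injective hp (by simpa using h)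
  have hcard : #((range N).map ⟨a, ha.injective⟩) = N := by simp
  -- `a` and `b` both enumerate the same finite set in increasing order
  have enum (c : ℕ → ℕ) (hc : StrictMono c)
      (hmem : ∀ j < N, c j ∈ (range N).map ⟨a, ha.injective⟩) :
      c i = ((range N).map ⟨a, ha.injective⟩).orderEmbOfFin hcard ⟨i, hi⟩ :=
    congrFun (orderEmbOfFin_unique hcard (f := fun j : Fin N => c j) (fun j => hmem j j.2)
      (fun _ _ hjk => hc hjk)) ⟨i, hi⟩
  rw [enum a ha fun j hj => mem_map_of_mem _ (mem_range.mpr hj),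
    enum b hb fun j hj => himage ▸ mem_map_of_mem _ (mem_range.mpr hj)]

theorem Nat.pow_add_sub_one_mul_sum_Ico_pow {p k N : ℕ} (hp : 1 ≤ p) (hkN : k ≤ N) :
    p ^ k + (p - 1) * ∑ j ∈ Ico k N, p ^ j = p ^ N := by
  induction N, hkN using Nat.le_induction with
  | base => simp
  | succ N hkN ih =>
    rw [sum_Ico_succ_top hkN, mul_add, ← add_assoc, ih, pow_succ', Nat.sub_one_mul]
    have := Nat.le_mul_of_pos_left (p ^ N) hp
    omega

theorem IsPGroup.pow_prime_pow_eq_one_iff {p : ℕ} [Fact p.Prime] {G : Type*} [Group G]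
    (hG : IsPGroup p G) (x : G) (i : ℕ) : x ^ p ^ i = 1 ↔ orderOf x ≤ p ^ i := by
  obtain ⟨k, hk⟩ := IsPGroup.iff_orderOf.mp hG x
  rw [← orderOf_dvd_iff_pow_eq_one, hk, Nat.pow_dvd_pow_iff_le_right (Fact.out : p.Prime).one_lt,
    Nat.pow_le_pow_iff_right (Fact.out : p.Prime).one_lt]

theorem orderOf_add_sub_one_mul_sum_range {p N : ℕ} (hp : p.Prime) {G : Type*} [Group G]
    [DecidableEq G] {x : G} (hx : x ^ p ^ N = 1) :
    orderOf x + (p - 1) * ∑ j ∈ range N, (if x ^ p ^ j = 1 then p ^ j else 0) = p ^ N := by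
  obtain ⟨k, hkN, hk⟩ := (Nat.dvd_prime_pow hp).mp (orderOf_dvd_of_pow_eq_one hx)
  have hfilter : (range N).filter (fun j => x ^ p ^ j = 1) = Ico k N := by
    ext j
    rw [mem_filter, mem_range, mem_Ico, ← orderOf_dvd_iff_pow_eq_one, hk,
      Nat.pow_dvd_pow_iff_le_right hp.one_lt]
    omega
  rw [← sum_filter, hfilter, hk]
  exact Nat.pow_add_sub_one_mul_sum_Ico_pow hp.one_lt.le hkN

theorem psi_add_sub_one_mul_sum_range {p N : ℕ} (hp : p.Prime) {G : Type*} [Group G] [Fintype G]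
    [DecidableEq G] (hN : ∀ x : G, x ^ p ^ N = 1) :
    psi G + (p - 1) * ∑ j ∈ range N, p ^ j * #{x : G | x ^ p ^ j = 1} =
      Fintype.card G * p ^ N := by
  have hswap : ∑ j ∈ range N, p ^ j * #{x : G | x ^ p ^ j = 1}
      = ∑ x : G, ∑ j ∈ range N, (if x ^ p ^ j = 1 then p ^ j else 0) := by
    rw [sum_comm]
    refine sum_congr rfl fun j _ => ?_
    rw [sum_ite, sum_const_zero, add_zero, sum_const, smul_eq_mul, mul_comm]
  rw [psi, finsum_eq_sum_of_fintype, hswap, mul_sum, ← sum_add_distrib,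
    sum_congr rfl fun x _ => orderOf_add_sub_one_mul_sum_range hp (hN x), sum_const, card_univ,
    smul_eq_mul]

theorem omega_mono (p : ℕ) (G : Type*) [Group G] : Monotone (Omega p G) := fun i j hij =>
  Subgroup.closure_mono fun x (hx : x ^ p ^ i = 1) => show x ^ p ^ j = 1 by
    rw [← Nat.sub_add_cancel hij, pow_add, mul_comm, pow_mul, hx, one_pow]

theorem IsPGroup.exists_monotone_card_omega_eq_pow {p : ℕ} (hp : p.Prime) {G : Type*} [Group G]
    [Finite G] (hG : IsPGroup p G) :
    ∃ e : ℕ → ℕ, Monotone e ∧ ∀ i, Nat.card (Omega p G i) = p ^ e i := by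
  have : Fact p.Prime := ⟨hp⟩
  choose e he using fun i => (hG.to_subgroup (Omega p G i)).exists_card_eq
  refine ⟨e, fun i j hij => ?_, he⟩
  rw [← Nat.pow_le_pow_iff_right hp.one_lt, ← he, ← he]
  exact Subgroup.card_le_of_le (omega_mono p G hij)

namespace CP2

variable {p : ℕ} {G : Type*} [Group G]

theorem mem_omega_iff (hp : p.Prime) (hG : IsPGroup p G) (hcp : CP2 G) {i : ℕ} {x : G} :
    x ∈ Omega p G i ↔ x ^ p ^ i = 1 := by
  have : Fact p.Prime := ⟨hp⟩
  refine ⟨fun hx => ?_, fun hx => Subgroup.subset_closure hx⟩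
  induction hx using Subgroup.closure_induction with
  | mem x hx => exact hx
  | one => exact one_pow _
  | mul x y _ _ hx hy =>
    rw [hG.pow_prime_pow_eq_one_iff] at hx hy ⊢
    exact (hcp x y).trans (max_le hx hy)
  | inv x _ hx => rw [inv_pow, hx, inv_one]

theorem card_omega [Fintype G] [DecidableEq G] (hp : p.Prime) (hG : IsPGroup p G) (hcp : CP2 G)
    (i : ℕ) : Nat.card (Omega p G i) = #{x : G | x ^ p ^ i = 1} := by
  rw [← Fintype.card_subtype, ← Nat.card_eq_fintype_card]
  exact Nat.card_congr (Equiv.subtypeEquivRight fun _ => mem_omega_iff hp hG hcp)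

theorem psi_add_sub_one_mul_sum_card_omega [Finite G] (hp : p.Prime) (hG : IsPGroup p G)
    (hcp : CP2 G) {N : ℕ} (hN : Nat.card G ∣ p ^ N) :
    psi G + (p - 1) * ∑ j ∈ range N, p ^ j * Nat.card (Omega p G j) = Nat.card G * p ^ N := by
  classical
  have := Fintype.ofFinite G
  simp only [card_omega hp hG hcp, Nat.card_eq_fintype_card]
  exact psi_add_sub_one_mul_sum_range hp fun x =>
    orderOf_dvd_iff_pow_eq_one.mp ((orderOf_dvd_natCard x).trans hN)

end CP2

theorem stmt_8 {p n : ℕ} (hp : p.Prime) (P Q : Type*) [Group P] [Finite P]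
    [Group Q] [Finite Q] (hPp : IsPGroup p P) (hQp : IsPGroup p Q)
    (hcpP : CP2 P) (hcpQ : CP2 Q)
    (hcardP : Nat.card P = p ^ n) (hcardQ : Nat.card Q = p ^ n)
    (hpsi : psi P = psi Q) :
    ∀ i : ℕ, Nat.card (Omega p P i) = Nat.card (Omega p Q i) := by
  intro i
  obtain ⟨eP, heP_mono, heP⟩ := hPp.exists_monotone_card_omega_eq_pow hp
  obtain ⟨eQ, heQ_mono, heQ⟩ := hQp.exists_monotone_card_omega_eq_pow hp
  set N := n + (i + 1)
  have hN : p ^ n ∣ p ^ N := pow_dvd_pow p (Nat.le_add_right n _)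
  have hP := CP2.psi_add_sub_one_mul_sum_card_omega hp hPp hcpP (hcardP ▸ hN)
  have hQ := CP2.psi_add_sub_one_mul_sum_card_omega hp hQp hcpQ (hcardQ ▸ hN)
  simp only [heP, heQ, ← pow_add, hcardP, hcardQ] at hP hQ
  have hsum : ∑ j ∈ range N, p ^ (j + eP j) = ∑ j ∈ range N, p ^ (j + eQ j) :=
    Nat.eq_of_mul_eq_mul_left (Nat.sub_pos_of_lt hp.one_lt) (by omega)
  have hexp := StrictMono.eq_of_sum_range_pow_eq hp.two_le
    (strictMono_id.add_monotone heP_mono) (strictMono_id.add_monotone heQ_mono) hsum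
    (by omega : i < N)
  rw [heP, heQ, Nat.add_left_cancel hexp]
end

section
/- Let P be a finite p-group in CP₂ of exponent p^m with m ≥ 2, and suppose that for i ≤ j, Ω_i(Ω_j(P)) = Ω_i(P). Then ψ(P) = ψ(Ω_{m-t}(P)) + Σ_{i=1}^{t} |Ω_{m-i}(P)|·p^{m-i+1}·(|Ω_{m-i+1}(P)|/|Ω_{m-i}(P)| − 1) for any 1 ≤ t ≤ m−1. -/
/-! In a CP₂ p-group the elements with `x ^ p ^ k = 1` already form a subgroup, so `Ω_k(P)` is
exactly this set. An element of `Ω_{k+1}(P) \ Ω_k(P)` has order `p ^ (k+1)`, hence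
`ψ(Ω_{k+1}) = ψ(Ω_k) + (|Ω_{k+1}| - |Ω_k|) p^(k+1)`. Telescoping from `Ω_m(P) = P` down to
`Ω_{m-t}(P)`, and writing `|Ω_{k+1}| - |Ω_k| = |Ω_k| (|Ω_{k+1}| / |Ω_k| - 1)` by Lagrange, gives
the formula. -/

open Finset

theorem Nat.eq_add_sum_Icc_of_succ {f g : ℕ → ℕ} (hfg : ∀ k, f (k + 1) = f k + g k)
    {n t : ℕ} (htn : t ≤ n) : f n = f (n - t) + ∑ i ∈ Icc 1 t, g (n - i) := by
  induction t with
  | zero => simp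
  | succ t ih =>
    have hsucc : n - (t + 1) + 1 = n - t := by omega
    rw [ih (by omega), sum_Icc_succ_top (by omega), ← hsucc, hfg]
    ring

theorem pow_pow_succ_eq_one {M : Type*} [Monoid M] {x : M} {p k : ℕ} (hx : x ^ p ^ k = 1) :
    x ^ p ^ (k + 1) = 1 := by
  rw [pow_succ, pow_mul, hx, one_pow]

theorem Omega_le_succ (p : ℕ) (G : Type*) [Group G] (k : ℕ) :
    Omega p G k ≤ Omega p G (k + 1) :=
  Subgroup.closure_mono fun _ => pow_pow_succ_eq_one

theorem psi_eq_sum {G : Type*} [Group G] [Fintype G] : psi G = ∑ x : G, orderOf x :=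
  finsum_eq_sum_of_fintype _

theorem psi_subgroup_eq_sum {G : Type*} [Group G] [Fintype G] (H : Subgroup G)
    [DecidablePred (· ∈ H)] : psi H = ∑ x with x ∈ H, orderOf x := by
  simp only [psi_eq_sum, ← Subgroup.orderOf_coe]
  exact (sum_subtype _ (fun x => by simp) orderOf).symm

def omegaFinset (p : ℕ) (G : Type*) [Group G] [Fintype G] [DecidableEq G] (k : ℕ) :
    Finset G :=
  {x | x ^ p ^ k = 1}

section OmegaFinset

variable {p : ℕ} {G : Type*} [Group G] [Fintype G] [DecidableEq G]

@[simp]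
theorem mem_omegaFinset {k : ℕ} {x : G} : x ∈ omegaFinset p G k ↔ x ^ p ^ k = 1 := by
  simp [omegaFinset]

theorem omegaFinset_subset_succ (k : ℕ) : omegaFinset p G k ⊆ omegaFinset p G (k + 1) :=
  fun _ hx => mem_omegaFinset.2 (pow_pow_succ_eq_one (mem_omegaFinset.1 hx))

theorem omegaFinset_eq_univ_of_exponent {m : ℕ} (hexp : Monoid.exponent G = p ^ m) :
    omegaFinset p G m = univ :=
  eq_univ_of_forall fun x => mem_omegaFinset.2 (hexp ▸ Monoid.pow_exponent_eq_one x)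

theorem sum_orderOf_omegaFinset_succ (hp : p.Prime) (k : ℕ) :
    ∑ x ∈ omegaFinset p G (k + 1), orderOf x =
      ∑ x ∈ omegaFinset p G k, orderOf x +
        (#(omegaFinset p G (k + 1)) - #(omegaFinset p G k)) * p ^ (k + 1) := by
  have : Fact p.Prime := ⟨hp⟩
  have hnew : ∀ x ∈ omegaFinset p G (k + 1) \ omegaFinset p G k, orderOf x = p ^ (k + 1) := by
    intro x hx
    rw [mem_sdiff, mem_omegaFinset, mem_omegaFinset] at hx
    exact orderOf_eq_prime_pow hx.2 hx.1
  rw [← sum_sdiff (omegaFinset_subset_succ k), sum_congr rfl hnew, sum_const, smul_eq_mul,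
    card_sdiff_of_subset (omegaFinset_subset_succ k), add_comm]

end OmegaFinset

namespace CP2

variable {p : ℕ} {G : Type*} [Group G]

theorem mul_pow_eq_one (hp : p.Prime) (hG : IsPGroup p G) (hcp : CP2 G) {k : ℕ} {a b : G}
    (ha : a ^ p ^ k = 1) (hb : b ^ p ^ k = 1) : (a * b) ^ p ^ k = 1 := by
  have : Fact p.Prime := ⟨hp⟩
  have hpk : 0 < p ^ k := pow_pos hp.pos k
  obtain ⟨j, hj⟩ := IsPGroup.iff_orderOf.mp hG (a * b)
  have hle : p ^ j ≤ p ^ k := hj ▸ (hcp a b).trans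
    (max_le (Nat.le_of_dvd hpk (orderOf_dvd_of_pow_eq_one ha))
      (Nat.le_of_dvd hpk (orderOf_dvd_of_pow_eq_one hb)))
  rw [← orderOf_dvd_iff_pow_eq_one, hj]
  exact pow_dvd_pow p ((Nat.pow_le_pow_iff_right hp.one_lt).1 hle)

theorem mem_Omega_iff (hp : p.Prime) (hG : IsPGroup p G) (hcp : CP2 G) {k : ℕ} {x : G} :
    x ∈ Omega p G k ↔ x ^ p ^ k = 1 :=
  ⟨fun hx => Subgroup.closure_induction (fun _ h => h) (one_pow _)
      (fun _ _ _ _ ha hb => mul_pow_eq_one hp hG hcp ha hb)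
      (fun _ _ h => by rw [inv_pow, h, inv_one]) hx,
    fun hx => Subgroup.subset_closure hx⟩

variable [Fintype G] [DecidableEq G]

theorem card_Omega (hp : p.Prime) (hG : IsPGroup p G) (hcp : CP2 G) (k : ℕ) :
    Nat.card (Omega p G k) = #(omegaFinset p G k) := by
  have hcoe : (Omega p G k : Set G) = omegaFinset p G k := by
    ext x
    simp [mem_Omega_iff hp hG hcp]
  rw [← SetLike.coe_sort_coe, hcoe, Nat.card_coe_set_eq, Set.ncard_coe_finset]

theorem psi_Omega (hp : p.Prime) (hG : IsPGroup p G) (hcp : CP2 G) (k : ℕ) :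
    psi (Omega p G k) = ∑ x ∈ omegaFinset p G k, orderOf x := by
  classical
  rw [psi_subgroup_eq_sum]
  congr 1
  ext x
  simp [mem_Omega_iff hp hG hcp]

end CP2

theorem stmt_15_general {p m t : ℕ} (hp : p.Prime) (P : Type*) [Group P] [Finite P]
    (hP : IsPGroup p P) (hcp : CP2 P) (hexp : Monoid.exponent P = p ^ m)
    (ht2 : t ≤ m - 1) :
    psi P = psi (Omega p P (m - t)) + ∑ i ∈ Finset.Icc 1 t,
      Nat.card (Omega p P (m - i)) * p ^ (m - i + 1) *
        (Nat.card (Omega p P (m - i + 1)) / Nat.card (Omega p P (m - i)) - 1) := by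
  classical
  have := Fintype.ofFinite P
  have hlagrange (k : ℕ) :
      Nat.card (Omega p P k) * (Nat.card (Omega p P (k + 1)) / Nat.card (Omega p P k) - 1) =
        #(omegaFinset p P (k + 1)) - #(omegaFinset p P k) := by
    rw [Nat.mul_sub_one, Nat.mul_div_cancel' (Subgroup.card_dvd_of_le (Omega_le_succ p P k)),
      CP2.card_Omega hp hP hcp, CP2.card_Omega hp hP hcp]
  rw [psi_eq_sum, ← omegaFinset_eq_univ_of_exponent hexp, CP2.psi_Omega hp hP hcp]
  refine (Nat.eq_add_sum_Icc_of_succ (f := fun k => ∑ x ∈ omegaFinset p P k, orderOf x)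
    (sum_orderOf_omegaFinset_succ hp) (by omega : t ≤ m)).trans ?_
  congr 1
  refine sum_congr rfl fun i _ => ?_
  rw [mul_right_comm, hlagrange]

theorem stmt_15 {p m t : ℕ} (hp : p.Prime) (P : Type*) [Group P] [Finite P]
    (hP : IsPGroup p P) (hcp : CP2 P) (hexp : Monoid.exponent P = p ^ m)
    (hm : 2 ≤ m)
    (hOmega : ∀ i j : ℕ, i ≤ j →
      (Omega p (Omega p P j) i).map (Omega p P j).subtype = Omega p P i)
    (ht1 : 1 ≤ t) (ht2 : t ≤ m - 1) :
    psi P = psi (Omega p P (m - t)) + ∑ i ∈ Finset.Icc 1 t,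
      Nat.card (Omega p P (m - i)) * p ^ (m - i + 1) *
        (Nat.card (Omega p P (m - i + 1)) / Nat.card (Omega p P (m - i)) - 1) :=
  stmt_15_general hp P hP hcp hexp ht2
end
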